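/- Let (X,E) be an expansive and (m,k)-departing rooted graph. Then there is a constant D_0 = D_0(m,k) > 0 such that for all geodesic rays x = [x_i], y = [y_i] from the root, |(x|y) − |x ∨ y|_k| ≤ D_0, where |x ∨ y|_k := sup{ i ≥ 0 : d_h(x_i,y_i) ≤ k } and (x|y) := lim_i (x_i|y_i). Consequently, two rays converge to the same boundary point if and only if d_h(x_i,y_i) ≤ k for all i ≥ 0. -/

import Mathlib

open SimpleGraph Metric
open scoped ENNReal ENat

noncomputable section

/-- A locally finite connected graph with a distinguished root. -/
structure RootedGraph (X : Type*) where
  G : SimpleGraph X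
  root : X
  conn : G.Connected
  locFin : ∀ x : X, {y | G.Adj x y}.Finite

namespace RootedGraph

variable {X : Type*} (R : RootedGraph X)

/-- The level `|x| = d(ϑ,x)` of a vertex. -/
def level (x : X) : ℕ := R.G.dist R.root x

/-- The horizontal subgraph: edges joining vertices of equal level. -/
def Gh : SimpleGraph X where
  Adj x y := R.G.Adj x y ∧ R.level x = R.level y
  symm := ⟨fun _ _ h => ⟨h.1.symm, h.2.symm⟩⟩
  loopless := ⟨fun x h => R.G.loopless.irrefl x h.1⟩

/-- The horizontal distance `d_h`, valued in `ℕ∞`. -/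
def dh (x y : X) : ℕ∞ := R.Gh.edist x y

/-- The `m`-th descendant set `J_m(x)`: vertices `y` with `|y| = |x| + m` lying
below `x` (i.e. `x` lies on a geodesic from the root to `y`). -/
def J (m : ℕ) (x : X) : Set X :=
  {y | R.level y = R.level x + m ∧ R.G.dist x y = m}

/-- `(m,k)`-departing property. -/
def Departing (m k : ℕ) : Prop :=
  ∀ x y : X, R.level x = R.level y → (k : ℕ∞) < R.dh x y →
    ∀ u ∈ R.J m x, ∀ v ∈ R.J m y, ((2 * k : ℕ) : ℕ∞) < R.dh u v

/-- Expansive property. -/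
def Expansive : Prop :=
  ∀ x y : X, R.level x = R.level y → (1 : ℕ∞) < R.dh x y →
    ∀ u ∈ R.J 1 x, ∀ v ∈ R.J 1 y, (1 : ℕ∞) < R.dh u v

/-- The Gromov product `(x|y)` with base point the root. -/
def gp (x y : X) : ℝ := ((R.level x : ℝ) + R.level y - R.G.dist x y) / 2

/-- Gromov hyperbolicity with respect to the root base point. -/
def Hyperbolic : Prop :=
  ∃ δ : ℝ, 0 ≤ δ ∧ ∀ x y z : X, min (R.gp x z) (R.gp z y) - δ ≤ R.gp x y

/-- A geodesic ray from the root. -/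
def IsRay (f : ℕ → X) : Prop := f 0 = R.root ∧ ∀ i, f (i + 1) ∈ R.J 1 (f i)

/-- The Gromov product of two rays: the (increasing) limit of `(x_i|y_i)`. -/
def gpRay (f g : ℕ → X) : ℝ≥0∞ := ⨆ i, ENNReal.ofReal (R.gp (f i) (g i))

/-- `|x ∨ y|_k = sup{ i : d_h(x_i,y_i) ≤ k }`. -/
def joinK (k : ℕ) (f g : ℕ → X) : ℝ≥0∞ :=
  ⨆ (i : ℕ) (_ : R.dh (f i) (g i) ≤ (k : ℕ∞)), (i : ℝ≥0∞)

/-- The Gromov product on a model `B` of the hyperbolic boundary, defined as the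
supremum over pairs of converging rays. -/
def gpB {B : Type*} (lim : (ℕ → X) → B) (ξ η : B) : ℝ≥0∞ :=
  ⨆ (f : ℕ → X) (g : ℕ → X)
    (_ : R.IsRay f ∧ R.IsRay g ∧ lim f = ξ ∧ lim g = η), R.gpRay f g

/-- `B` together with `lim` is a model of the hyperbolic boundary: every point is the
limit of a ray, and two rays have the same limit iff they are equivalent. -/
def BoundaryOf {B : Type*} (lim : (ℕ → X) → B) : Prop :=
  (∀ ξ : B, ∃ f, R.IsRay f ∧ lim f = ξ) ∧
    ∀ f g, R.IsRay f → R.IsRay g → (lim f = lim g ↔ R.gpRay f g = ⊤)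

/-- The metric on the boundary model is a Gromov metric:
`θ_a(ξ,η) ≍ e^{-a(ξ|η)}`. -/
def GromovLike {B : Type*} [MetricSpace B] (lim : (ℕ → X) → B) (a c₁ c₂ : ℝ) : Prop :=
  ∀ ξ η : B, ξ ≠ η →
    c₁ * Real.exp (-a * (R.gpB lim ξ η).toReal) ≤ dist ξ η ∧
      dist ξ η ≤ c₂ * Real.exp (-a * (R.gpB lim ξ η).toReal)

/-- The boundary cell `J_∂(x)`: boundary points reachable by rays through `x`. -/
def cell {B : Type*} (lim : (ℕ → X) → B) (x : X) : Set B :=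
  {ξ | ∃ f, R.IsRay f ∧ f (R.level x) = x ∧ lim f = ξ}

/-- The `k`-shadow `J^k_∂(x)`. -/
def shadow {B : Type*} (lim : (ℕ → X) → B) (k : ℕ) (x : X) : Set B :=
  ⋃ y ∈ {y | R.level y = R.level x ∧ R.dh x y ≤ (k : ℕ∞)}, R.cell lim y

/-- Bounded degree. -/
def BddDeg : Prop := ∃ D : ℕ, ∀ x : X, Set.ncard {y | R.G.Adj x y} ≤ D

/-- A vertical rooted graph: all edges join adjacent levels. -/
def Vertical : Prop :=
  ∀ x y : X, R.G.Adj x y → R.level x = R.level y + 1 ∨ R.level y = R.level x + 1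

/-- An index map on `(X,E_v)` over `M`. -/
def IsIndexMap {M : Type*} [MetricSpace M] (Φ : X → Set M) : Prop :=
  (∀ x, IsCompact (Φ x)) ∧ (∀ x, (Φ x).Nonempty) ∧
    (∀ x y, y ∈ R.J 1 x → Φ y ⊆ Φ x) ∧
    (∀ f, R.IsRay f → ∃ p, (⋂ i, Φ (f i)) = {p})

/-- The attractor of an index map. -/
def attractor {M : Type*} [MetricSpace M] (Φ : X → Set M) : Set M :=
  ⋂ n : ℕ, ⋃ x ∈ {x | R.level x = n}, Φ x

/-- Exponential type-(b): `diam Φ(x) ≤ δ₀ e^{-b|x|}`. -/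
def ExpType {M : Type*} [MetricSpace M] (Φ : X → Set M) (b δ₀ : ℝ) : Prop :=
  ∀ x, EMetric.diam (Φ x) ≤ ENNReal.ofReal (δ₀ * Real.exp (-b * R.level x))

/-- Condition `(S_b)`. -/
def CondS {M : Type*} [MetricSpace M] (Φ : X → Set M) (b : ℝ) : Prop :=
  ∀ c : ℝ, 0 < c → ∃ ℓ : ℕ, ∀ (n : ℕ) (F : Set M),
    EMetric.diam F < ENNReal.ofReal (c * Real.exp (-b * n)) →
      Set.ncard {x | R.level x = n ∧ ((Φ x ∩ R.attractor Φ) ∩ F).Nonempty} ≤ ℓ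

end RootedGraph

/-- Distance between two subsets of a metric space. -/
def setDist {M : Type*} [MetricSpace M] (s t : Set M) : ℝ :=
  sInf ((fun p : M × M => dist p.1 p.2) '' s ×ˢ t)

/-- The AI_b-graph on `X` associated to an index map `Φ`:
same root, same vertical edges, and horizontal edges between distinct equal-level
vertices whose index sets are `γe^{-bn}`-close. -/
def RootedGraph.IsAIb {X M : Type*} [MetricSpace M] (R R' : RootedGraph X)
    (Φ : X → Set M) (b γ : ℝ) : Prop :=
  R'.root = R.root ∧ ∀ x y : X, R'.G.Adj x y ↔
    (R.G.Adj x y ∨ (R.level x = R.level y ∧ x ≠ y ∧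
      setDist (Φ x) (Φ y) ≤ γ * Real.exp (-b * R.level x)))

/-- The AI_∞-graph on `X` associated to an index map `Φ`. -/
def RootedGraph.IsAIinf {X M : Type*} [MetricSpace M] (R R' : RootedGraph X)
    (Φ : X → Set M) : Prop :=
  R'.root = R.root ∧ ∀ x y : X, R'.G.Adj x y ↔
    (R.G.Adj x y ∨ (R.level x = R.level y ∧ x ≠ y ∧ (Φ x ∩ Φ y).Nonempty))

end

/-!
Along two rays the horizontal distance `d_h(x_i,y_i)` is at most `k` up to level
`t = |x ∨ y|_k` and exceeds `k` afterwards; by the departing property it then at least doubles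
every `m` levels, so `d_h(x_l,y_l) ≥ 2(l - t) - C` for `l > t`. On the other hand, a geodesic from
`x_i` to `y_i` whose lowest vertex lies at level `l` has length at least
`2(i - l) + d_h(x_l,y_l) - 2`: project its vertices to their ancestors at level `l`; by
expansiveness the projection moves horizontally by at most one along every step that is not a
parent-to-child step, and there are at most `d(x_i,y_i) - 2(i - l)` of those. Together,
`d(x_i,y_i) ≥ 2(i - t) - C - 2`, that is `(x_i|y_i) ≤ t + C'`, while `(x_t|y_t) ≥ t - k`
because `d ≤ d_h`.
-/

theorem SimpleGraph.exists_edist_le_of_edist_le_add {V : Type*} {G : SimpleGraph V} {u v : V}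
    {a b : ℕ} (h : G.edist u v ≤ (a + b : ℕ)) : ∃ w, G.edist u w ≤ a ∧ G.edist w v ≤ b := by
  obtain ⟨W, hW⟩ := (reachable_of_edist_ne_top (ne_top_of_le_ne_top (ENat.natCast_ne_top _) h))
    |>.exists_walk_length_eq_edist
  have hlen : W.length ≤ a + b := by exact_mod_cast hW ▸ h
  refine ⟨W.getVert a, (edist_le (W.take a)).trans ?_, (edist_le (W.drop a)).trans ?_⟩
  · exact_mod_cast (W.take_length a).trans_le (min_le_left _ _)
  · rw [Walk.drop_length]
    exact_mod_cast (by omega : W.length - a ≤ b)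

lemma mul_le_two_pow_add_mul_self (a e : ℕ) : a * e ≤ 2 ^ e + a * a := by
  rcases le_total e a with h | h
  · exact (Nat.mul_le_mul_left a h).trans (Nat.le_add_left _ _)
  · obtain ⟨r, rfl⟩ := Nat.exists_eq_add_of_le h
    calc a * (a + r) = a * a + a * r := by ring
      _ ≤ a * a + 2 ^ a * 2 ^ r := by gcongr <;> exact Nat.lt_two_pow_self.le
      _ = 2 ^ (a + r) + a * a := by ring

lemma exists_two_mul_succ_le_two_pow_div {m : ℕ} (hm : 0 < m) :
    ∃ C, ∀ n, 2 * (n + 1) ≤ 2 ^ (n / m) + C := by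
  refine ⟨2 * m * (2 * m) + 2 * m, fun n => ?_⟩
  have h₁ := Nat.lt_div_mul_add (a := n) hm
  have h₂ := mul_le_two_pow_add_mul_self (2 * m) (n / m)
  nlinarith

namespace RootedGraph

variable {X : Type*} (R : RootedGraph X)

lemma level_root : R.level R.root = 0 := by simp [level]

lemma level_le_level_add_dist (x y : X) : R.level y ≤ R.level x + R.G.dist x y :=
  R.conn.dist_triangle

lemma level_le_level_add_one_of_adj {x y : X} (h : R.G.Adj x y) :
    R.level y ≤ R.level x + 1 := by
  simpa [dist_eq_one_iff_adj.mpr h] using R.level_le_level_add_dist x y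

variable {R} {m k : ℕ} {f g : ℕ → X}

lemma mem_J_iff {j : ℕ} {x y : X} :
    y ∈ R.J j x ↔ R.level y = R.level x + j ∧ R.G.dist x y ≤ j := by
  refine ⟨fun h => ⟨h.1, h.2.le⟩, fun h => ⟨h.1, le_antisymm h.2 ?_⟩⟩
  have := R.level_le_level_add_dist x y
  omega

lemma mem_J_zero {x y : X} : y ∈ R.J 0 x ↔ y = x := by
  refine ⟨fun h => (R.conn.dist_eq_zero_iff.mp h.2).symm, ?_⟩
  rintro rfl
  exact ⟨rfl, by simp⟩

lemma mem_J_one_of_adj {x y : X} (h : R.G.Adj x y) (hl : R.level y = R.level x + 1) :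
    y ∈ R.J 1 x :=
  ⟨hl, dist_eq_one_iff_adj.mpr h⟩

lemma mem_J_add {a b : ℕ} {x y z : X} (hy : y ∈ R.J a x) (hz : z ∈ R.J b y) :
    z ∈ R.J (a + b) x := by
  refine mem_J_iff.mpr ⟨by rw [hz.1, hy.1, add_assoc], ?_⟩
  calc R.G.dist x z ≤ R.G.dist x y + R.G.dist y z := R.conn.dist_triangle
    _ = a + b := by rw [hy.2, hz.2]

lemma exists_mem_J_of_mem_J_add {a b : ℕ} {x z : X} (h : z ∈ R.J (a + b) x) :
    ∃ y ∈ R.J a x, z ∈ R.J b y := by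
  obtain ⟨W, hW⟩ := R.conn.exists_walk_length_eq_dist x z
  have hxy : R.G.dist x (W.getVert a) ≤ a :=
    (dist_le (W.take a)).trans ((W.take_length a).trans_le (min_le_left _ _))
  have hyz : R.G.dist (W.getVert a) z ≤ b :=
    (dist_le (W.drop a)).trans (by rw [Walk.drop_length, hW, h.2]; omega)
  have := R.level_le_level_add_dist x (W.getVert a)
  have := R.level_le_level_add_dist (W.getVert a) z
  have := h.1
  exact ⟨W.getVert a, mem_J_iff.mpr ⟨by omega, hxy⟩, mem_J_iff.mpr ⟨by omega, hyz⟩⟩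

lemma exists_mem_J_of_le_level {j : ℕ} {w : X} (h : j ≤ R.level w) : ∃ x, w ∈ R.J j x := by
  have hw : w ∈ R.J (R.level w - j + j) R.root :=
    ⟨by rw [level_root]; omega, by rw [Nat.sub_add_cancel h]; rfl⟩
  obtain ⟨x, -, hx⟩ := exists_mem_J_of_mem_J_add hw
  exact ⟨x, hx⟩

lemma level_eq_of_dh_ne_top {x y : X} (h : R.dh x y ≠ ⊤) : R.level x = R.level y := by
  obtain ⟨W⟩ := reachable_of_edist_ne_top h
  clear h
  induction W with
  | nil => rfl
  | cons hadj _ ih => exact hadj.2.trans ih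

lemma level_eq_of_dh_le {x y : X} {n : ℕ} (h : R.dh x y ≤ n) : R.level x = R.level y :=
  level_eq_of_dh_ne_top (ne_top_of_le_ne_top (ENat.natCast_ne_top n) h)

lemma dh_comm (x y : X) : R.dh x y = R.dh y x := edist_comm

lemma dh_triangle (x y z : X) : R.dh x z ≤ R.dh x y + R.dh y z := SimpleGraph.edist_triangle

lemma dh_le_one_of_adj {x y : X} (h : R.G.Adj x y) (hl : R.level x = R.level y) :
    R.dh x y ≤ 1 :=
  (edist_eq_one_iff_adj.mpr (show R.Gh.Adj x y from ⟨h, hl⟩)).le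

lemma dist_le_dh (x y : X) : (R.G.dist x y : ℕ∞) ≤ R.dh x y := by
  rw [(R.conn x y).coe_dist_eq_edist]
  exact edist_anti fun _ _ h => h.1

lemma Expansive.dh_le_one_of_mem_J_one (hexp : R.Expansive) {u v x y : X} (huv : R.dh u v ≤ 1)
    (hu : u ∈ R.J 1 x) (hv : v ∈ R.J 1 y) : R.dh x y ≤ 1 := by
  have hl : R.level x = R.level y := by
    have := level_eq_of_dh_le (n := 1) (by exact_mod_cast huv)
    have := hu.1
    have := hv.1
    omega
  by_contra! h
  exact (hexp x y hl h u hu v hv).not_ge huv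

lemma Expansive.dh_le_one (hexp : R.Expansive) {j : ℕ} {u v x y : X} (huv : R.dh u v ≤ 1)
    (hu : u ∈ R.J j x) (hv : v ∈ R.J j y) : R.dh x y ≤ 1 := by
  induction j generalizing u v with
  | zero =>
    rw [mem_J_zero] at hu hv
    rwa [← hu, ← hv]
  | succ j ih =>
    obtain ⟨p, hp, hup⟩ := exists_mem_J_of_mem_J_add hu
    obtain ⟨q, hq, hvq⟩ := exists_mem_J_of_mem_J_add hv
    exact ih (hexp.dh_le_one_of_mem_J_one huv hup hvq) hp hq

lemma Departing.dh_le (hdep : R.Departing m k) {u v x y : X} (huv : R.dh u v ≤ (2 * k : ℕ))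
    (hu : u ∈ R.J m x) (hv : v ∈ R.J m y) : R.dh x y ≤ k := by
  have hl : R.level x = R.level y := by
    have := level_eq_of_dh_le huv
    have := hu.1
    have := hv.1
    omega
  by_contra! h
  exact (hdep x y hl h u hu v hv).not_ge huv

lemma dh_le_mul_of_mem_J {j a b : ℕ}
    (H : ∀ {u v x y : X}, R.dh u v ≤ a → u ∈ R.J j x → v ∈ R.J j y → R.dh x y ≤ b)
    {Q : ℕ} (hQ : 0 < Q) {u v x y : X} (huv : R.dh u v ≤ (a * Q : ℕ))
    (hu : u ∈ R.J j x) (hv : v ∈ R.J j y) : R.dh x y ≤ (b * Q : ℕ) := by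
  induction Q, hQ using Nat.le_induction generalizing u x with
  | base => simpa using H (by simpa using huv) hu hv
  | succ Q _ ih =>
    obtain ⟨w, huw, hwv⟩ :=
      exists_edist_le_of_edist_le_add (G := R.Gh) (u := u) (v := v) (a := a) (b := a * Q)
        (by rwa [show a + a * Q = a * (Q + 1) by ring])
    obtain ⟨z, hz⟩ := exists_mem_J_of_le_level (j := j) (w := w)
      (by rw [← level_eq_of_dh_le huw, hu.1]; omega)
    calc R.dh x y ≤ R.dh x z + R.dh z y := dh_triangle x z y
      _ ≤ b + (b * Q : ℕ) := add_le_add (H huw hu hz) (ih hwv hz)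
      _ = (b * (Q + 1) : ℕ) := by push_cast; ring

lemma IsRay.level_eq (hf : R.IsRay f) (i : ℕ) : R.level (f i) = i := by
  induction i with
  | zero => rw [hf.1, level_root]
  | succ i ih => rw [(hf.2 i).1, ih]

lemma IsRay.mem_J (hf : R.IsRay f) {i j : ℕ} (hij : i ≤ j) :
    f j ∈ R.J (j - i) (f i) := by
  obtain ⟨d, rfl⟩ := Nat.exists_eq_add_of_le hij
  rw [Nat.add_sub_cancel_left]
  clear hij
  induction d with
  | zero => exact mem_J_zero.mpr rfl
  | succ d ih => exact mem_J_add ih (hf.2 _)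

lemma IsRay.gp_eq (hf : R.IsRay f) (hg : R.IsRay g) (i : ℕ) :
    R.gp (f i) (g i) = i - R.G.dist (f i) (g i) / 2 := by
  rw [gp, hf.level_eq, hg.level_eq]
  ring

lemma IsRay.dh_le_of_le (hexp : R.Expansive) (hk : 0 < k) (hf : R.IsRay f) (hg : R.IsRay g)
    {i j : ℕ} (hij : i ≤ j) (h : R.dh (f j) (g j) ≤ k) :
    R.dh (f i) (g i) ≤ k := by
  simpa using dh_le_mul_of_mem_J (a := 1) (b := 1)
    (fun huv hu hv => hexp.dh_le_one (by exact_mod_cast huv) hu hv) hk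
    (by simpa using h) (hf.mem_J hij) (hg.mem_J hij)

lemma Expansive.dh_le_one_of_adj_of_level_le (hexp : R.Expansive) {p b x x' : X} {jp jb : ℕ}
    (h : R.G.Adj p b) (hl : R.level b ≤ R.level p) (hp : p ∈ R.J jp x) (hb : b ∈ R.J jb x')
    (hx : R.level x = R.level x') : R.dh x x' ≤ 1 := by
  have := hp.1
  have := hb.1
  rcases (show R.level b = R.level p ∨ R.level p = R.level b + 1 by
    have := R.level_le_level_add_one_of_adj h.symm; omega) with hpb | hpb
  · obtain rfl : jb = jp := by omega
    exact hexp.dh_le_one (dh_le_one_of_adj h hpb.symm) hp hb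
  · obtain rfl : jp = jb + 1 := by omega
    exact hexp.dh_le_one (by simp [dh]) hp (mem_J_add hb (mem_J_one_of_adj h.symm hpb))

lemma Expansive.dh_add_level_le (hexp : R.Expansive) {p q x y : X} {jp jq : ℕ}
    (W : R.G.Walk p q) (hW : ∀ w ∈ W.support, R.level x ≤ R.level w) (hp : p ∈ R.J jp x)
    (hq : q ∈ R.J jq y) (hxy : R.level x = R.level y) :
    R.dh x y + R.level q ≤ (W.length + R.level p + 1 : ℕ) := by
  induction W generalizing x jp with
  | nil =>
    obtain rfl : jq = jp := by have := hp.1; have := hq.1; omega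
    have := hexp.dh_le_one (by simp [dh]) hp hq
    rw [Walk.length_nil, zero_add, Nat.cast_add, Nat.cast_one, add_comm _ (1 : ℕ∞)]
    exact add_le_add_left this _
  | @cons p b q h W ih =>
    have hW' : ∀ w ∈ W.support, R.level x ≤ R.level w := fun w hw => hW w (by simp [hw])
    rw [Walk.length_cons]
    by_cases hup : R.level b = R.level p + 1
    · have := ih hW' (mem_J_add hp (mem_J_one_of_adj h hup)) hq hxy
      rwa [hup, show W.length + (R.level p + 1) = W.length + 1 + R.level p by ring] at this
    · have hxb := hW' b W.start_mem_support
      obtain ⟨x', hx'⟩ := exists_mem_J_of_le_level (Nat.sub_le (R.level b) (R.level x))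
      have hlx' : R.level x' = R.level x := by have := hx'.1; omega
      have hbp : R.level b ≤ R.level p := by
        have := R.level_le_level_add_one_of_adj h; omega
      have h1 := hexp.dh_le_one_of_adj_of_level_le h hbp hp hx' hlx'.symm
      have h2 := ih (x := x') (by rwa [hlx']) hx' hq (hlx'.trans hxy)
      calc R.dh x y + R.level q ≤ R.dh x x' + (R.dh x' y + R.level q) := by
            rw [← add_assoc]; gcongr; exact dh_triangle x x' y
        _ ≤ 1 + (W.length + R.level b + 1 : ℕ) := add_le_add h1 h2
        _ ≤ (W.length + 1 + R.level p + 1 : ℕ) := by norm_cast; omega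

lemma IsRay.exists_two_mul_sub_add_dh_le (hexp : R.Expansive) (hf : R.IsRay f) (hg : R.IsRay g)
    (i : ℕ) :
    ∃ l ≤ i, ((2 * (i - l) : ℕ) : ℕ∞) + R.dh (f l) (g l) ≤ (R.G.dist (f i) (g i) + 2 : ℕ) := by
  classical
  obtain ⟨W, hW⟩ := R.conn.exists_walk_length_eq_dist (f i) (g i)
  obtain ⟨w, hw, hmin⟩ := W.support.toFinset.exists_min_image R.level ⟨f i, by simp⟩
  rw [List.mem_toFinset] at hw
  have hmin' : ∀ u ∈ W.support, R.level w ≤ R.level u := fun u hu =>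
    hmin u (List.mem_toFinset.mpr hu)
  have hli : R.level w ≤ i := hf.level_eq i ▸ hmin' _ W.start_mem_support
  have h₁ := hexp.dh_add_level_le (W.takeUntil w hw).reverse
    (fun u hu => hmin' u (W.support_takeUntil_subset_support hw
      (by rwa [Walk.support_reverse, List.mem_reverse] at hu)))
    (mem_J_zero.mpr rfl) (hf.mem_J hli) (hf.level_eq _).symm
  have h₂ := hexp.dh_add_level_le (W.dropUntil w hw)
    (fun u hu => hmin' u (W.support_dropUntil_subset_support hw hu))
    (mem_J_zero.mpr rfl) (hg.mem_J hli) (hg.level_eq _).symm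
  have hlen : (W.takeUntil w hw).length + (W.dropUntil w hw).length = W.length := by
    rw [← Walk.length_append, Walk.take_spec]
  rw [hf.level_eq, Walk.length_reverse] at h₁
  rw [hg.level_eq] at h₂
  obtain ⟨a, ha⟩ := ENat.ne_top_iff_exists.mp (ne_top_of_le_ne_top (ENat.natCast_ne_top _)
    (le_self_add.trans h₁))
  obtain ⟨b, hb⟩ := ENat.ne_top_iff_exists.mp (ne_top_of_le_ne_top (ENat.natCast_ne_top _)
    (le_self_add.trans h₂))
  rw [← ha] at h₁
  rw [← hb] at h₂
  norm_cast at h₁ h₂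
  refine ⟨R.level w, hli, ?_⟩
  calc ((2 * (i - R.level w) : ℕ) : ℕ∞) + R.dh (f (R.level w)) (g (R.level w))
      ≤ ((2 * (i - R.level w) : ℕ) : ℕ∞) + (a + b : ℕ) := by
        rw [Nat.cast_add, ha, hb, dh_comm w]
        gcongr
        exact dh_triangle _ w _
    _ ≤ (R.G.dist (f i) (g i) + 2 : ℕ) := by norm_cast; omega

lemma IsRay.mul_two_pow_lt_dh (hdep : R.Departing m k) (hf : R.IsRay f) (hg : R.IsRay g)
    {t i : ℕ} (hgt : ∀ j, t < j → j ≤ i → (k : ℕ∞) < R.dh (f j) (g j)) (e : ℕ) :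
    ∀ l, t + 1 + e * m ≤ l → l ≤ i → ((k * 2 ^ e : ℕ) : ℕ∞) < R.dh (f l) (g l) := by
  induction e with
  | zero => exact fun l htl hli => by simpa using hgt l (by omega) hli
  | succ e ih =>
    intro l htl hli
    rw [add_one_mul] at htl
    have hprev := ih (l - m) (by omega) (by omega)
    by_contra! hle
    have hm : l - (l - m) = m := by omega
    have := dh_le_mul_of_mem_J (fun huv hu hv => hdep.dh_le huv hu hv) (Nat.two_pow_pos e)
      (by rwa [show 2 * k * 2 ^ e = k * 2 ^ (e + 1) by ring])
      (hm ▸ hf.mem_J (Nat.sub_le l m)) (hm ▸ hg.mem_J (Nat.sub_le l m))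
    exact this.not_gt hprev

lemma IsRay.two_mul_sub_le_dh (hdep : R.Departing m k) (hk : 0 < k) (hf : R.IsRay f)
    (hg : R.IsRay g) {C : ℕ} (hC : ∀ n, 2 * (n + 1) ≤ 2 ^ (n / m) + C) {t i : ℕ}
    (hgt : ∀ j, t < j → j ≤ i → (k : ℕ∞) < R.dh (f j) (g j)) {l : ℕ} (htl : t < l)
    (hli : l ≤ i) : ((2 * (l - t) : ℕ) : ℕ∞) ≤ R.dh (f l) (g l) + C := by
  set e := (l - t - 1) / m
  have he : e * m ≤ l - t - 1 := Nat.div_mul_le_self _ _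
  have hlt := hf.mul_two_pow_lt_dh hdep hg hgt e l (by omega) hli
  have hlin : 2 * (l - t) ≤ 2 ^ e + C := by
    simpa [show l - t - 1 + 1 = l - t by omega] using hC (l - t - 1)
  calc ((2 * (l - t) : ℕ) : ℕ∞) ≤ ((k * 2 ^ e : ℕ) : ℕ∞) + C := by
        exact_mod_cast hlin.trans (by gcongr; exact Nat.le_mul_of_pos_left _ hk)
    _ ≤ R.dh (f l) (g l) + C := by gcongr

lemma IsRay.two_mul_le_dist_add (hexp : R.Expansive) (hdep : R.Departing m k) (hk : 0 < k)
    (hf : R.IsRay f) (hg : R.IsRay g) {C : ℕ} (hC : ∀ n, 2 * (n + 1) ≤ 2 ^ (n / m) + C)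
    {t i : ℕ} (hgt : ∀ j, t < j → j ≤ i → (k : ℕ∞) < R.dh (f j) (g j)) :
    2 * i ≤ R.G.dist (f i) (g i) + 2 * t + C + 2 := by
  obtain ⟨l, hli, hl⟩ := hf.exists_two_mul_sub_add_dh_le hexp hg i
  rcases le_or_gt l t with hlt | htl
  · have : 2 * (i - l) ≤ R.G.dist (f i) (g i) + 2 := by exact_mod_cast le_self_add.trans hl
    omega
  · have h := hf.two_mul_sub_le_dh hdep hk hg hC hgt htl hli
    have : ((2 * (i - l) + 2 * (l - t) : ℕ) : ℕ∞) ≤ (R.G.dist (f i) (g i) + 2 + C : ℕ) :=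
      calc ((2 * (i - l) + 2 * (l - t) : ℕ) : ℕ∞)
          ≤ ((2 * (i - l) : ℕ) : ℕ∞) + R.dh (f l) (g l) + C := by
            rw [Nat.cast_add, add_assoc]; gcongr
        _ ≤ (R.G.dist (f i) (g i) + 2 + C : ℕ) := by
            rw [Nat.cast_add (R.G.dist (f i) (g i) + 2)]; gcongr
    have := (by exact_mod_cast this : 2 * (i - l) + 2 * (l - t) ≤ R.G.dist (f i) (g i) + 2 + C)
    omega

lemma le_joinK {i : ℕ} (h : R.dh (f i) (g i) ≤ k) : (i : ℝ≥0∞) ≤ R.joinK k f g :=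
  le_iSup₂ (f := fun i (_ : R.dh (f i) (g i) ≤ k) => (i : ℝ≥0∞)) i h

lemma IsRay.gpRay_le_joinK_add (hexp : R.Expansive) (hdep : R.Departing m k) (hk : 0 < k)
    (hf : R.IsRay f) (hg : R.IsRay g) {C : ℕ} (hC : ∀ n, 2 * (n + 1) ≤ 2 ^ (n / m) + C) :
    R.gpRay f g ≤ R.joinK k f g + (C + 2 : ℕ) := by
  classical
  refine iSup_le fun i => ?_
  set t := Nat.findGreatest (fun j => R.dh (f j) (g j) ≤ k) i
  have ht : R.dh (f t) (g t) ≤ k :=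
    Nat.findGreatest_spec (P := fun j => R.dh (f j) (g j) ≤ k) (Nat.zero_le i)
      (by simp [hf.1, hg.1, dh])
  have hdist := hf.two_mul_le_dist_add hexp hdep hk hg hC (t := t) (i := i)
    (fun j htj hji => not_le.mp (Nat.findGreatest_is_greatest htj hji))
  calc ENNReal.ofReal (R.gp (f i) (g i)) ≤ ENNReal.ofReal ((t + (C + 2) : ℕ) : ℝ) := by
        refine ENNReal.ofReal_le_ofReal ?_
        rw [hf.gp_eq hg]
        have : (2 * i : ℝ) ≤ R.G.dist (f i) (g i) + 2 * t + C + 2 := by exact_mod_cast hdist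
        push_cast
        linarith
    _ = t + (C + 2 : ℕ) := by rw [ENNReal.ofReal_natCast, Nat.cast_add]
    _ ≤ R.joinK k f g + (C + 2 : ℕ) := by gcongr; exact le_joinK ht

lemma IsRay.joinK_le_gpRay_add (hf : R.IsRay f) (hg : R.IsRay g) :
    R.joinK k f g ≤ R.gpRay f g + k := by
  refine iSup₂_le fun i hi => ?_
  have hd : (R.G.dist (f i) (g i) : ℝ) ≤ k := by exact_mod_cast (dist_le_dh _ _).trans hi
  calc (i : ℝ≥0∞) = ENNReal.ofReal i := (ENNReal.ofReal_natCast i).symm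
    _ ≤ ENNReal.ofReal (R.gp (f i) (g i) + k) := by
        refine ENNReal.ofReal_le_ofReal ?_
        rw [hf.gp_eq hg]
        linarith
    _ ≤ ENNReal.ofReal (R.gp (f i) (g i)) + k := by
        simpa using ENNReal.ofReal_add_le (p := R.gp (f i) (g i)) (q := k)
    _ ≤ R.gpRay f g + k := by
        gcongr
        exact le_iSup (fun i => ENNReal.ofReal (R.gp (f i) (g i))) i

lemma IsRay.joinK_eq_top_iff (hexp : R.Expansive) (hk : 0 < k) (hf : R.IsRay f)
    (hg : R.IsRay g) : R.joinK k f g = ⊤ ↔ ∀ i, R.dh (f i) (g i) ≤ k := by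
  refine ⟨fun htop i => ?_, fun h => eq_top_iff.mpr ?_⟩
  · by_contra! hi
    have : R.joinK k f g ≤ i := iSup₂_le fun j hj => Nat.cast_le.mpr <| by
      by_contra! hij
      exact (hf.dh_le_of_le hexp hk hg hij.le hj).not_gt hi
    exact (ENNReal.natCast_ne_top i) (top_le_iff.mp (htop ▸ this))
  · exact ENNReal.iSup_natCast ▸ iSup_le fun i => le_joinK (h i)

end RootedGraph

/-- Proposition 3.1: in an expansive `(m,k)`-departing rooted graph there
is `D₀ > 0` with `|(x|y) - |x ∨ y|_k| ≤ D₀` for all rays from the root; consequently two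
rays are equivalent iff `d_h(x_i,y_i) ≤ k` for all `i`. -/
theorem gpRay_joinK_bound {X : Type*} (R : RootedGraph X) (m k : ℕ) (hm : 0 < m)
    (hk : 0 < k) (hexp : R.Expansive) (hdep : R.Departing m k) :
    ∃ D₀ : ℝ≥0∞, 0 < D₀ ∧ D₀ < ⊤ ∧ ∀ f g : ℕ → X, R.IsRay f → R.IsRay g →
      (R.joinK k f g ≤ R.gpRay f g + D₀ ∧ R.gpRay f g ≤ R.joinK k f g + D₀) ∧
      (R.gpRay f g = ⊤ ↔ ∀ i, R.dh (f i) (g i) ≤ (k : ℕ∞)) := by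
  obtain ⟨C, hC⟩ := exists_two_mul_succ_le_two_pow_div hm
  refine ⟨(C + 2 + k : ℕ), by positivity, ENNReal.natCast_lt_top _, fun f g hf hg => ?_⟩
  have hupper := hf.gpRay_le_joinK_add hexp hdep hk hg hC
  have hlower := hf.joinK_le_gpRay_add hg (k := k)
  refine ⟨⟨hlower.trans (add_le_add le_rfl (by exact_mod_cast (by omega : k ≤ C + 2 + k))),
    hupper.trans (add_le_add le_rfl (by exact_mod_cast (by omega : C + 2 ≤ C + 2 + k)))⟩, ?_⟩
  rw [← hf.joinK_eq_top_iff hexp hk hg]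
  constructor <;> intro htop
  · rw [htop, top_le_iff] at hupper
    exact (ENNReal.add_eq_top.mp hupper).resolve_right (ENNReal.natCast_ne_top _)
  · rw [htop, top_le_iff] at hlower
    exact (ENNReal.add_eq_top.mp hlower).resolve_right (ENNReal.natCast_ne_top _)
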